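/- Let X be finite, ε > 0, α, β > 0, λ₀ > 0, and P₀, P₁ ∈ P_ε distinct with GJS(P₀,P₁,α) > λ₀. Define e_fix = inf{ D(Q‖P₁) + α·D(Q₀‖P₀) : Q, Q₀ ∈ P_ε, GJS(Q₀,Q,α) ≤ λ₀ } and κ = inf{ (1+β)·D(Q₁‖P₁) + α·D(Q₀‖P₀) : Q₀, Q₁ ∈ P_ε, GJS(Q₀,Q₁,α) ≤ λ₀ }. Then 0 < e_fix < κ. -/

import Mathlib

/-!
The feasible set `S = {(Q₀, Q) ∈ P_ε² | GJS(Q₀, Q, α) ≤ λ₀}` is compact, nonempty, and convex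
because GJS is jointly convex (it is built from the jointly convex `(p, q) ↦ p log (p / q)`), so
both infima are attained. Since `(P₀, P₁) ∉ S`, the objective of `e_fix` is positive on `S`.
Let `(A, B)` attain `κ`. If `B ≠ P₁`, then `e_fix ≤ D(B‖P₁) + α D(A‖P₀) < κ`. If `B = P₁`, then
`A ≠ P₀`; moving from `(A, P₁)` towards `(P₀, P₀) ∈ S` by a small `t` lowers `α D(·‖P₀)` by at
least `t α D(A‖P₀)` (convexity) while `D((1 - t) P₁ + t P₀ ‖ P₁) ≤ t² χ²(P₀‖P₁)` (from
`log x ≤ x - 1`) is only quadratic in `t`, so the objective of `e_fix` drops below `κ`.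
-/

open scoped BigOperators

/-- KL divergence (base-2 logarithms) between finitely supported distributions. -/
noncomputable def KL {X : Type*} [Fintype X] (P Q : X → ℝ) : ℝ :=
  ∑ x, P x * Real.logb 2 (P x / Q x)

/-- `P` is a probability distribution on the finite alphabet `X`. -/
def IsProb {X : Type*} [Fintype X] (P : X → ℝ) : Prop :=
  (∀ x, 0 ≤ P x) ∧ ∑ x, P x = 1

/-- The α-weighted generalized Jensen–Shannon divergence. -/
noncomputable def GJS {X : Type*} [Fintype X] (P Q : X → ℝ) (α : ℝ) : ℝ :=
  α * KL P (fun x => (α * P x + Q x) / (α + 1)) +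
    KL Q (fun x => (α * P x + Q x) / (α + 1))

open Real Topology

lemma sub_le_mul_log_div {p q : ℝ} (hp : 0 ≤ p) (hq : 0 < q) : p - q ≤ p * log (p / q) := by
  rcases hp.eq_or_lt with rfl | hp
  · simpa using hq.le
  have h := mul_le_mul_of_nonneg_left (log_le_sub_one_of_pos (div_pos hq hp)) hp.le
  rw [mul_sub, mul_div_cancel₀ _ hp.ne', mul_one] at h
  rw [← neg_neg (log (p / q)), ← log_inv, inv_div]
  linarith

lemma sub_lt_mul_log_div {p q : ℝ} (hp : 0 ≤ p) (hq : 0 < q) (hpq : p ≠ q) :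
    p - q < p * log (p / q) := by
  rcases hp.eq_or_lt with rfl | hp
  · simpa using hq
  have hqp : q / p ≠ 1 := fun h => hpq ((div_eq_one_iff_eq hp.ne').mp h).symm
  have h := mul_lt_mul_of_pos_left (log_lt_sub_one_of_pos (div_pos hq hp) hqp) hp
  rw [mul_sub, mul_div_cancel₀ _ hp.ne', mul_one] at h
  rw [← neg_neg (log (p / q)), ← log_inv, inv_div]
  linarith

lemma mul_log_div_le {p q : ℝ} (hp : 0 ≤ p) (hq : 0 < q) :
    p * log (p / q) ≤ (p - q) ^ 2 / q + (p - q) := by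
  rcases hp.eq_or_lt with rfl | hp
  · simp [sq, hq.ne']
  calc p * log (p / q) ≤ p * (p / q - 1) :=
        mul_le_mul_of_nonneg_left (log_le_sub_one_of_pos (div_pos hp hq)) hp.le
    _ = (p - q) ^ 2 / q + (p - q) := by field_simp; ring

lemma mul_log_div_convexComb_le {a b p q p' q' : ℝ} (ha : 0 ≤ a) (hb : 0 ≤ b) (hab : a + b = 1)
    (hp : 0 ≤ p) (hq : 0 < q) (hp' : 0 ≤ p') (hq' : 0 < q') :
    (a * p + b * p') * log ((a * p + b * p') / (a * q + b * q')) ≤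
      a * (p * log (p / q)) + b * (p' * log (p' / q')) := by
  set Q := a * q + b * q'
  have hQ : 0 < Q := by
    rcases ha.eq_or_lt with rfl | ha
    · simp only [zero_add] at hab; simp [Q, hab, hq']
    · positivity
  -- perspective of the convex function `x ↦ x log x`, with weights `a q / Q` and `b q' / Q`
  have h := convexOn_mul_log.2 (Set.mem_Ici.2 (div_nonneg hp hq.le))
    (Set.mem_Ici.2 (div_nonneg hp' hq'.le)) (div_nonneg (mul_nonneg ha hq.le) hQ.le)
    (div_nonneg (mul_nonneg hb hq'.le) hQ.le) (by rw [← add_div, div_self hQ.ne'])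
  have hmix : a * q / Q * (p / q) + b * q' / Q * (p' / q') = (a * p + b * p') / Q := by
    field_simp
  simp only [smul_eq_mul, hmix] at h
  calc (a * p + b * p') * log ((a * p + b * p') / Q)
      = Q * ((a * p + b * p') / Q * log ((a * p + b * p') / Q)) := by field_simp
    _ ≤ Q * (a * q / Q * (p / q * log (p / q)) + b * q' / Q * (p' / q' * log (p' / q'))) :=
        mul_le_mul_of_nonneg_left h hQ.le
    _ = a * (p * log (p / q)) + b * (p' * log (p' / q')) := by field_simp

section

variable {X : Type*} [Fintype X]

lemma KL_eq_sum_mul_log_div (P Q : X → ℝ) : KL P Q = (∑ x, P x * log (P x / Q x)) / log 2 := by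
  simp only [KL, logb, Finset.sum_div, mul_div_assoc]

lemma KL_self (P : X → ℝ) : KL P P = 0 :=
  Finset.sum_eq_zero fun x _ => by rcases eq_or_ne (P x) 0 with h | h <;> simp [h]

lemma KL_nonneg {P Q : X → ℝ} (hP : ∀ x, 0 ≤ P x) (hQ : ∀ x, 0 < Q x)
    (hPQ : ∑ x, P x = ∑ x, Q x) : 0 ≤ KL P Q := by
  rw [KL_eq_sum_mul_log_div]
  refine div_nonneg ?_ (log_nonneg one_le_two)
  calc 0 = ∑ x, (P x - Q x) := by rw [Finset.sum_sub_distrib, hPQ, sub_self]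
    _ ≤ ∑ x, P x * log (P x / Q x) := Finset.sum_le_sum fun x _ => sub_le_mul_log_div (hP x) (hQ x)

lemma KL_pos {P Q : X → ℝ} (hP : ∀ x, 0 ≤ P x) (hQ : ∀ x, 0 < Q x)
    (hPQ : ∑ x, P x = ∑ x, Q x) (hne : P ≠ Q) : 0 < KL P Q := by
  obtain ⟨y, hy⟩ := Function.ne_iff.mp hne
  rw [KL_eq_sum_mul_log_div]
  refine div_pos ?_ (log_pos one_lt_two)
  calc 0 = ∑ x, (P x - Q x) := by rw [Finset.sum_sub_distrib, hPQ, sub_self]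
    _ < ∑ x, P x * log (P x / Q x) :=
      Finset.sum_lt_sum (fun x _ => sub_le_mul_log_div (hP x) (hQ x))
        ⟨y, Finset.mem_univ y, sub_lt_mul_log_div (hP y) (hQ y) hy⟩

lemma KL_le_chiSq {P Q : X → ℝ} (hP : ∀ x, 0 ≤ P x) (hQ : ∀ x, 0 < Q x)
    (hPQ : ∑ x, P x = ∑ x, Q x) : KL P Q ≤ (∑ x, (P x - Q x) ^ 2 / Q x) / log 2 := by
  rw [KL_eq_sum_mul_log_div]
  refine div_le_div_of_nonneg_right ?_ (log_nonneg one_le_two)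
  calc ∑ x, P x * log (P x / Q x) ≤ ∑ x, ((P x - Q x) ^ 2 / Q x + (P x - Q x)) :=
        Finset.sum_le_sum fun x _ => mul_log_div_le (hP x) (hQ x)
    _ = ∑ x, (P x - Q x) ^ 2 / Q x := by
        rw [Finset.sum_add_distrib, Finset.sum_sub_distrib, hPQ, sub_self, add_zero]

lemma KL_convexComb_le_sq {P R : X → ℝ} (hP : ∀ x, 0 < P x) (hR : ∀ x, 0 ≤ R x)
    (hPR : ∑ x, R x = ∑ x, P x) {t : ℝ} (ht₀ : 0 ≤ t) (ht₁ : t ≤ 1) :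
    KL ((1 - t) • P + t • R) P ≤ t ^ 2 * ((∑ x, (R x - P x) ^ 2 / P x) / log 2) := by
  have hmix : ∀ x, ((1 - t) • P + t • R) x = P x + t * (R x - P x) := fun x => by
    simp only [Pi.add_apply, Pi.smul_apply, smul_eq_mul]; ring
  refine (KL_le_chiSq (fun x => ?_) hP ?_).trans_eq ?_
  · rw [hmix]; nlinarith [hP x, hR x]
  · simp only [hmix, Finset.sum_add_distrib, ← Finset.mul_sum, Finset.sum_sub_distrib, hPR,
      sub_self, mul_zero, add_zero]
  · simp only [hmix, add_sub_cancel_left, mul_pow, mul_div_assoc, ← Finset.mul_sum]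

lemma KL_convexComb_le {P Q P' Q' : X → ℝ} (hP : ∀ x, 0 ≤ P x) (hQ : ∀ x, 0 < Q x)
    (hP' : ∀ x, 0 ≤ P' x) (hQ' : ∀ x, 0 < Q' x) {a b : ℝ} (ha : 0 ≤ a) (hb : 0 ≤ b)
    (hab : a + b = 1) :
    KL (a • P + b • P') (a • Q + b • Q') ≤ a * KL P Q + b * KL P' Q' := by
  simp only [KL_eq_sum_mul_log_div, Pi.add_apply, Pi.smul_apply, smul_eq_mul, mul_div_assoc',
    ← add_div, Finset.mul_sum, ← Finset.sum_add_distrib]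
  exact div_le_div_of_nonneg_right (Finset.sum_le_sum fun x _ =>
    mul_log_div_convexComb_le ha hb hab (hP x) (hQ x) (hP' x) (hQ' x)) (log_nonneg one_le_two)

lemma ContinuousOn.KL {Y : Type*} [TopologicalSpace Y] {F G : Y → X → ℝ} {s : Set Y}
    (hF : ContinuousOn F s) (hG : ContinuousOn G s) (hF₀ : ∀ y ∈ s, ∀ x, F y x ≠ 0)
    (hG₀ : ∀ y ∈ s, ∀ x, G y x ≠ 0) : ContinuousOn (fun y => KL (F y) (G y)) s := by
  refine continuousOn_finsetSum _ fun x _ => ?_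
  have hFx : ContinuousOn (fun y => F y x) s := (continuous_apply x).comp_continuousOn hF
  have hGx : ContinuousOn (fun y => G y x) s := (continuous_apply x).comp_continuousOn hG
  exact hFx.mul ((hFx.div hGx fun y hy => hG₀ y hy x).logb fun y hy =>
    div_ne_zero (hF₀ y hy x) (hG₀ y hy x))

lemma GJS_self {α : ℝ} (hα : α + 1 ≠ 0) (P : X → ℝ) : GJS P P α = 0 := by
  have hM : (fun x => (α * P x + P x) / (α + 1)) = P := funext fun x => by field_simp
  rw [GJS, hM, KL_self, mul_zero, add_zero]

lemma GJS_convexComb_le {α : ℝ} (hα : 0 ≤ α) {P Q P' Q' : X → ℝ} (hP : ∀ x, 0 < P x)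
    (hQ : ∀ x, 0 < Q x) (hP' : ∀ x, 0 < P' x) (hQ' : ∀ x, 0 < Q' x) {a b : ℝ} (ha : 0 ≤ a)
    (hb : 0 ≤ b) (hab : a + b = 1) :
    GJS (a • P + b • P') (a • Q + b • Q') α ≤ a * GJS P Q α + b * GJS P' Q' α := by
  set M : X → ℝ := fun x => (α * P x + Q x) / (α + 1)
  set M' : X → ℝ := fun x => (α * P' x + Q' x) / (α + 1)
  have hM : ∀ x, 0 < M x := fun x => by have := hP x; have := hQ x; positivity
  have hM' : ∀ x, 0 < M' x := fun x => by have := hP' x; have := hQ' x; positivity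
  have hmix : (fun x => (α * (a • P + b • P') x + (a • Q + b • Q') x) / (α + 1)) = a • M + b • M' :=
    funext fun x => by simp only [M, M', Pi.add_apply, Pi.smul_apply, smul_eq_mul]; ring
  have h₁ := KL_convexComb_le (fun x => (hP x).le) hM (fun x => (hP' x).le) hM' ha hb hab
  have h₂ := KL_convexComb_le (fun x => (hQ x).le) hM (fun x => (hQ' x).le) hM' ha hb hab
  simp only [GJS, hmix]
  nlinarith [mul_le_mul_of_nonneg_left h₁ hα]

lemma ContinuousOn.GJS {Y : Type*} [TopologicalSpace Y] {F G : Y → X → ℝ} {s : Set Y} {α : ℝ}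
    (hα : 0 ≤ α) (hF : ContinuousOn F s) (hG : ContinuousOn G s) (hF₀ : ∀ y ∈ s, ∀ x, 0 < F y x)
    (hG₀ : ∀ y ∈ s, ∀ x, 0 < G y x) : ContinuousOn (fun y => GJS (F y) (G y) α) s := by
  have hM : ContinuousOn (fun y x => (α * F y x + G y x) / (α + 1)) s :=
    ((hF.const_smul α).add hG).div_const _
  have hM₀ : ∀ y ∈ s, ∀ x, (α * F y x + G y x) / (α + 1) ≠ 0 := fun y hy x => by
    have := hF₀ y hy x; have := hG₀ y hy x; positivity
  exact ((hF.KL hM (fun y hy x => (hF₀ y hy x).ne') hM₀).const_smul α).add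
    (hG.KL hM (fun y hy x => (hG₀ y hy x).ne') hM₀)

variable (X) in
def probSimplexGE (ε : ℝ) : Set (X → ℝ) := stdSimplex ℝ X ∩ Set.Ici fun _ => ε

variable (X) in
def gjsSublevel (ε α lam0 : ℝ) : Set ((X → ℝ) × (X → ℝ)) :=
  {p ∈ probSimplexGE X ε ×ˢ probSimplexGE X ε | GJS p.1 p.2 α ≤ lam0}

lemma gjsSublevel_subset (ε α lam0 : ℝ) :
    gjsSublevel X ε α lam0 ⊆ probSimplexGE X ε ×ˢ probSimplexGE X ε :=
  Set.sep_subset _ _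

lemma pos_of_mem_probSimplexGE {ε : ℝ} (hε : 0 < ε) {P : X → ℝ} (hP : P ∈ probSimplexGE X ε)
    (x : X) : 0 < P x :=
  hε.trans_le (hP.2 x)

variable (X) in
lemma isCompact_probSimplexGE (ε : ℝ) : IsCompact (probSimplexGE X ε) :=
  (isCompact_stdSimplex ℝ X).inter_right isClosed_Ici

variable (X) in
lemma convex_probSimplexGE (ε : ℝ) : Convex ℝ (probSimplexGE X ε) :=
  (convex_stdSimplex ℝ X).inter (convex_Ici _)

lemma isCompact_gjsSublevel {ε α : ℝ} (hε : 0 < ε) (hα : 0 ≤ α) (lam0 : ℝ) :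
    IsCompact (gjsSublevel X ε α lam0) := by
  have hK := (isCompact_probSimplexGE X ε).prod (isCompact_probSimplexGE X ε)
  have hGJS : ContinuousOn (fun p : (X → ℝ) × (X → ℝ) => GJS p.1 p.2 α)
      (probSimplexGE X ε ×ˢ probSimplexGE X ε) :=
    ContinuousOn.GJS hα continuous_fst.continuousOn continuous_snd.continuousOn
      (fun _ hp => pos_of_mem_probSimplexGE hε hp.1)
      (fun _ hp => pos_of_mem_probSimplexGE hε hp.2)
  exact hK.of_isClosed_subset (hGJS.preimage_isClosed_of_isClosed hK.isClosed isClosed_Iic)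
    (gjsSublevel_subset ε α lam0)

lemma convex_gjsSublevel {ε α : ℝ} (hε : 0 < ε) (hα : 0 ≤ α) (lam0 : ℝ) :
    Convex ℝ (gjsSublevel X ε α lam0) := by
  rintro p ⟨hpK, hp⟩ q ⟨hqK, hq⟩ a b ha hb hab
  refine ⟨((convex_probSimplexGE X ε).prod (convex_probSimplexGE X ε)) hpK hqK ha hb hab, ?_⟩
  calc GJS (a • p + b • q).1 (a • p + b • q).2 α ≤ a * GJS p.1 p.2 α + b * GJS q.1 q.2 α :=
        GJS_convexComb_le hα (pos_of_mem_probSimplexGE hε hpK.1)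
          (pos_of_mem_probSimplexGE hε hpK.2) (pos_of_mem_probSimplexGE hε hqK.1)
          (pos_of_mem_probSimplexGE hε hqK.2) ha hb hab
    _ ≤ a * lam0 + b * lam0 := by gcongr
    _ = lam0 := by rw [← add_mul, hab, one_mul]

lemma mk_self_mem_gjsSublevel {ε α lam0 : ℝ} (hα : 0 ≤ α) (hlam : 0 ≤ lam0) {P : X → ℝ}
    (hP : P ∈ probSimplexGE X ε) : (P, P) ∈ gjsSublevel X ε α lam0 :=
  ⟨⟨hP, hP⟩, by rw [GJS_self (by positivity)]; exact hlam⟩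

lemma exists_isMinOn_KL_add_KL {ε α lam0 : ℝ} (hε : 0 < ε) (hα : 0 ≤ α) (hlam : 0 ≤ lam0)
    {P₀ P₁ : X → ℝ} (hP₀ : P₀ ∈ probSimplexGE X ε) (hP₁ : P₁ ∈ probSimplexGE X ε) (c d : ℝ) :
    ∃ p ∈ gjsSublevel X ε α lam0,
      IsMinOn (fun p => c * KL p.2 P₁ + d * KL p.1 P₀) (gjsSublevel X ε α lam0) p := by
  have hobj : ContinuousOn (fun p : (X → ℝ) × (X → ℝ) => c * KL p.2 P₁ + d * KL p.1 P₀)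
      (probSimplexGE X ε ×ˢ probSimplexGE X ε) :=
    ((continuous_snd.continuousOn.KL continuousOn_const
        (fun _ hp x => (pos_of_mem_probSimplexGE hε hp.2 x).ne')
        fun _ _ x => (pos_of_mem_probSimplexGE hε hP₁ x).ne').const_smul c).add
      ((continuous_fst.continuousOn.KL continuousOn_const
        (fun _ hp x => (pos_of_mem_probSimplexGE hε hp.1 x).ne')
        fun _ _ x => (pos_of_mem_probSimplexGE hε hP₀ x).ne').const_smul d)
  exact (isCompact_gjsSublevel hε hα lam0).exists_isMinOn ⟨_, mk_self_mem_gjsSublevel hα hlam hP₀⟩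
    (hobj.mono (gjsSublevel_subset ε α lam0))

lemma KL_add_KL_pos_of_ne {α : ℝ} (hα : 0 < α) {P₀ P₁ Q₀ Q₁ : X → ℝ} (hP₀ : IsProb P₀)
    (hP₁ : IsProb P₁) (hP₀pos : ∀ x, 0 < P₀ x) (hP₁pos : ∀ x, 0 < P₁ x) (hQ₀ : IsProb Q₀)
    (hQ₁ : IsProb Q₁) (hne : (Q₀, Q₁) ≠ (P₀, P₁)) : 0 < KL Q₁ P₁ + α * KL Q₀ P₀ := by
  have h₁ := KL_nonneg hQ₁.1 hP₁pos (hQ₁.2.trans hP₁.2.symm)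
  by_cases h₀ : Q₀ = P₀
  · have hQ₁P₁ : Q₁ ≠ P₁ := fun h => hne (by rw [h₀, h])
    rw [h₀, KL_self, mul_zero, add_zero]
    exact KL_pos hQ₁.1 hP₁pos (hQ₁.2.trans hP₁.2.symm) hQ₁P₁
  · have := KL_pos hQ₀.1 hP₀pos (hQ₀.2.trans hP₀.2.symm) h₀
    positivity

lemma exists_mem_gjsSublevel_KL_add_KL_lt_of_snd_eq {ε α lam0 : ℝ} (hε : 0 < ε) (hα : 0 < α)
    (hlam : 0 ≤ lam0) {P₀ P₁ A : X → ℝ} (hP₀ : P₀ ∈ probSimplexGE X ε)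
    (hP₁ : P₁ ∈ probSimplexGE X ε) (hA : (A, P₁) ∈ gjsSublevel X ε α lam0) (hAP₀ : A ≠ P₀) :
    ∃ q ∈ gjsSublevel X ε α lam0, KL q.2 P₁ + α * KL q.1 P₀ < α * KL A P₀ := by
  have hP₀pos := pos_of_mem_probSimplexGE hε hP₀
  have hApos := pos_of_mem_probSimplexGE hε hA.1.1
  set K := KL A P₀
  set C := (∑ x, (P₀ x - P₁ x) ^ 2 / P₁ x) / log 2
  have hK : 0 < K := KL_pos (fun x => (hApos x).le) hP₀pos (hA.1.1.1.2.trans hP₀.1.2.symm) hAP₀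
  obtain ⟨t, ⟨ht₀, ht₁⟩, htC⟩ : ∃ t ∈ Set.Ioo (0 : ℝ) 1, t * C < α * K := by
    have hlim : Filter.Tendsto (fun t => t * C) (𝓝 0) (𝓝 0) := by
      simpa using (continuous_mul_const C).tendsto 0
    exact (Filter.Eventually.and (Ioo_mem_nhdsGT zero_lt_one)
      (nhdsWithin_le_nhds (hlim.eventually (gt_mem_nhds (by positivity))))).exists
  refine ⟨(1 - t) • (A, P₁) + t • (P₀, P₀), convex_gjsSublevel hε hα.le lam0 hA
    (mk_self_mem_gjsSublevel hα.le hlam hP₀) (by linarith) ht₀.le (by ring), ?_⟩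
  have h₁ : KL ((1 - t) • P₁ + t • P₀) P₁ ≤ t ^ 2 * C :=
    KL_convexComb_le_sq (pos_of_mem_probSimplexGE hε hP₁) hP₀.1.1 (hP₀.1.2.trans hP₁.1.2.symm)
      ht₀.le ht₁.le
  have h₀ : KL ((1 - t) • A + t • P₀) P₀ ≤ (1 - t) * K := by
    have := KL_convexComb_le (fun x => (hApos x).le) hP₀pos (fun x => (hP₀pos x).le) hP₀pos
      (sub_nonneg.2 ht₁.le) ht₀.le (sub_add_cancel 1 t)
    rwa [Convex.combo_self (sub_add_cancel 1 t), KL_self, mul_zero, add_zero] at this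
  simp only [Prod.fst_add, Prod.snd_add, Prod.smul_fst, Prod.smul_snd]
  nlinarith [mul_lt_mul_of_pos_left htC ht₀]

lemma exists_mem_gjsSublevel_KL_add_KL_lt {ε α β lam0 : ℝ} (hε : 0 < ε) (hα : 0 < α)
    (hβ : 0 < β) (hlam : 0 ≤ lam0) {P₀ P₁ : X → ℝ} (hP₀ : P₀ ∈ probSimplexGE X ε)
    (hP₁ : P₁ ∈ probSimplexGE X ε) (hGJS : lam0 < GJS P₀ P₁ α) {p : (X → ℝ) × (X → ℝ)}
    (hp : p ∈ gjsSublevel X ε α lam0) :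
    ∃ q ∈ gjsSublevel X ε α lam0,
      KL q.2 P₁ + α * KL q.1 P₀ < (1 + β) * KL p.2 P₁ + α * KL p.1 P₀ := by
  obtain ⟨A, B⟩ := p
  obtain ⟨⟨hA, hB⟩, hAB⟩ := hp
  by_cases hBP₁ : B = P₁
  · subst hBP₁
    have hAP₀ : A ≠ P₀ := by rintro rfl; exact hAB.not_gt hGJS
    simpa [KL_self] using
      exists_mem_gjsSublevel_KL_add_KL_lt_of_snd_eq hε hα hlam hP₀ hP₁ ⟨⟨hA, hB⟩, hAB⟩ hAP₀
  · have := KL_pos hB.1.1 (pos_of_mem_probSimplexGE hε hP₁) (hB.1.2.trans hP₁.1.2.symm) hBP₁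
    exact ⟨(A, B), ⟨⟨hA, hB⟩, hAB⟩, by dsimp only; nlinarith⟩

end

theorem stmt11_general {X : Type*} [Fintype X] (ε α β lam0 : ℝ)
    (hε : 0 < ε) (hα : 0 < α) (hβ : 0 < β) (hlam : 0 < lam0)
    (P₀ P₁ : X → ℝ) (hP₀ : IsProb P₀) (hP₁ : IsProb P₁)
    (hP₀ε : ∀ x, ε ≤ P₀ x) (hP₁ε : ∀ x, ε ≤ P₁ x)
    (hGJS : lam0 < GJS P₀ P₁ α) :
    0 < sInf {v | ∃ Q Q₀ : X → ℝ, IsProb Q ∧ IsProb Q₀ ∧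
          (∀ x, ε ≤ Q x) ∧ (∀ x, ε ≤ Q₀ x) ∧ GJS Q₀ Q α ≤ lam0 ∧
          v = KL Q P₁ + α * KL Q₀ P₀} ∧
    sInf {v | ∃ Q Q₀ : X → ℝ, IsProb Q ∧ IsProb Q₀ ∧
          (∀ x, ε ≤ Q x) ∧ (∀ x, ε ≤ Q₀ x) ∧ GJS Q₀ Q α ≤ lam0 ∧
          v = KL Q P₁ + α * KL Q₀ P₀}
      < sInf {v | ∃ Q₀ Q₁ : X → ℝ, IsProb Q₀ ∧ IsProb Q₁ ∧
          (∀ x, ε ≤ Q₀ x) ∧ (∀ x, ε ≤ Q₁ x) ∧ GJS Q₀ Q₁ α ≤ lam0 ∧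
          v = (1+β) * KL Q₁ P₁ + α * KL Q₀ P₀} := by
  have hP₀' : P₀ ∈ probSimplexGE X ε := ⟨hP₀, hP₀ε⟩
  have hP₁' : P₁ ∈ probSimplexGE X ε := ⟨hP₁, hP₁ε⟩
  obtain ⟨pe, ⟨⟨hpe₀, hpe₁⟩, hpe⟩, hemin⟩ :=
    exists_isMinOn_KL_add_KL hε hα.le hlam.le hP₀' hP₁' 1 α
  simp only [one_mul] at hemin
  obtain ⟨pk, hpk, hkmin⟩ := exists_isMinOn_KL_add_KL hε hα.le hlam.le hP₀' hP₁' (1 + β) α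
  rw [IsLeast.csInf_eq (a := KL pe.2 P₁ + α * KL pe.1 P₀) ?e,
    IsLeast.csInf_eq (a := (1 + β) * KL pk.2 P₁ + α * KL pk.1 P₀) ?k]
  · obtain ⟨q, hq, hlt⟩ := exists_mem_gjsSublevel_KL_add_KL_lt hε hα hβ hlam.le hP₀' hP₁' hGJS hpk
    refine ⟨KL_add_KL_pos_of_ne hα hP₀ hP₁ (pos_of_mem_probSimplexGE hε hP₀')
      (pos_of_mem_probSimplexGE hε hP₁') hpe₀.1 hpe₁.1 ?_, (hemin hq).trans_lt hlt⟩
    exact fun h => (hpe.trans_lt hGJS).ne (by rw [Prod.mk.injEq] at h; rw [h.1, h.2])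
  case e =>
    refine ⟨⟨pe.2, pe.1, hpe₁.1, hpe₀.1, hpe₁.2, hpe₀.2, hpe, rfl⟩, ?_⟩
    rintro v ⟨Q, Q₀, hQ, hQ₀, hQε, hQ₀ε, hQQ₀, rfl⟩
    exact hemin (a := (Q₀, Q)) ⟨⟨⟨hQ₀, hQ₀ε⟩, hQ, hQε⟩, hQQ₀⟩
  case k =>
    refine ⟨⟨pk.1, pk.2, hpk.1.1.1, hpk.1.2.1, hpk.1.1.2, hpk.1.2.2, hpk.2, rfl⟩, ?_⟩
    rintro v ⟨Q₀, Q₁, hQ₀, hQ₁, hQ₀ε, hQ₁ε, hQ₀Q₁, rfl⟩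
    exact hkmin (a := (Q₀, Q₁)) ⟨⟨⟨hQ₀, hQ₀ε⟩, hQ₁, hQ₁ε⟩, hQ₀Q₁⟩

/-- If `GJS(P₀,P₁,α) > lam0`, then `0 < e_fix < κ`. -/
theorem stmt11 {X : Type*} [Fintype X] (ε α β lam0 : ℝ)
    (hε : 0 < ε) (hα : 0 < α) (hβ : 0 < β) (hlam : 0 < lam0)
    (P₀ P₁ : X → ℝ) (hP₀ : IsProb P₀) (hP₁ : IsProb P₁)
    (hP₀ε : ∀ x, ε ≤ P₀ x) (hP₁ε : ∀ x, ε ≤ P₁ x) (hne : P₀ ≠ P₁)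
    (hGJS : lam0 < GJS P₀ P₁ α) :
    0 < sInf {v | ∃ Q Q₀ : X → ℝ, IsProb Q ∧ IsProb Q₀ ∧
          (∀ x, ε ≤ Q x) ∧ (∀ x, ε ≤ Q₀ x) ∧ GJS Q₀ Q α ≤ lam0 ∧
          v = KL Q P₁ + α * KL Q₀ P₀} ∧
    sInf {v | ∃ Q Q₀ : X → ℝ, IsProb Q ∧ IsProb Q₀ ∧
          (∀ x, ε ≤ Q x) ∧ (∀ x, ε ≤ Q₀ x) ∧ GJS Q₀ Q α ≤ lam0 ∧
          v = KL Q P₁ + α * KL Q₀ P₀}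
      < sInf {v | ∃ Q₀ Q₁ : X → ℝ, IsProb Q₀ ∧ IsProb Q₁ ∧
          (∀ x, ε ≤ Q₀ x) ∧ (∀ x, ε ≤ Q₁ x) ∧ GJS Q₀ Q₁ α ≤ lam0 ∧
          v = (1+β) * KL Q₁ P₁ + α * KL Q₀ P₀} :=
  stmt11_general ε α β lam0 hε hα hβ hlam P₀ P₁ hP₀ hP₁ hP₀ε hP₁ε hGJS
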